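/- arXiv:math/0512070 — 5 statements merged into one kernel-verified Lean document; each statement's English description precedes it below -/
import Mathlib

section
/- The cross ratio of four Lagrangian subspaces is well defined: let (L_1, L_2, L_3, L_4) be Lagrangian subspaces of V with L_1 ∩ L_4 = 0 and L_3 ∩ L_2 = 0, and for each a let l^a and l'^a be two bases of L_a. Then (det A_{l^1,l^2} · det A_{l^3,l^4}) / (det A_{l^1,l^4} · det A_{l^3,l^2}) = (det A_{l'^1,l'^2} · det A_{l'^3,l'^4}) / (det A_{l'^1,l'^4} · det A_{l'^3,l'^2}), and the determinants appearing in the denominators are nonzero. -/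
open Module

variable {V : Type*} [AddCommGroup V] [Module ℝ V]

/-- `L` is a Lagrangian subspace of the symplectic vector space `(V, ω)` of dimension `2n`:
it has dimension `n` and `ω` vanishes identically on it. -/
def IsLagrangian (ω : LinearMap.BilinForm ℝ V) (n : ℕ) (L : Submodule ℝ V) : Prop :=
  Module.finrank ℝ L = n ∧ ∀ u ∈ L, ∀ v ∈ L, ω u v = 0

/-- The determinant of the `n × n` matrix `A_{l,m}` with entries `ω(l_i, m_j)`,
where `l` and `m` are bases of the submodules `L` and `M`. -/
noncomputable def detA {n : ℕ} (ω : LinearMap.BilinForm ℝ V) {L M : Submodule ℝ V}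
    (l : Basis (Fin n) ℝ L) (m : Basis (Fin n) ℝ M) : ℝ :=
  (Matrix.of fun (i j : Fin n) => ω (l i : V) (m j : V)).det

lemma detA_change {n : ℕ} (ω : LinearMap.BilinForm ℝ V) {L M : Submodule ℝ V}
    (l l' : Basis (Fin n) ℝ L) (m m' : Basis (Fin n) ℝ M) :
    detA ω l' m' = (l.toMatrix ⇑l').det * detA ω l m * (m.toMatrix ⇑m').det := by
  have key : (Matrix.of fun i j => ω (l' i : V) (m' j : V)) =
      Matrix.transpose (l.toMatrix ⇑l') * (Matrix.of fun i j => ω (l i : V) (m j : V)) * (m.toMatrix ⇑m') := by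
    ext i j
    have hl : (l' i : V) = ∑ k, l.repr (l' i) k • (l k : V) := by
      simpa only [map_sum, map_smul, Submodule.subtype_apply] using congrArg (Submodule.subtype L) (l.sum_repr (l' i)).symm
    have hm : (m' j : V) = ∑ r, m.repr (m' j) r • (m r : V) := by
      simpa only [map_sum, map_smul, Submodule.subtype_apply] using congrArg (Submodule.subtype M) (m.sum_repr (m' j)).symm
    rw [Matrix.mul_apply]
    simp only [Matrix.mul_apply, Matrix.transpose_apply, Basis.toMatrix_apply, Matrix.of_apply]
    rw [hl, hm]
    simp only [map_sum, map_smul, LinearMap.smul_apply, smul_eq_mul,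
      LinearMap.sum_apply, Finset.sum_mul, Finset.mul_sum]
    apply Finset.sum_congr rfl; intro k _
    apply Finset.sum_congr rfl; intro r _
    ring
  rw [detA, key, Matrix.det_mul, Matrix.det_mul, Matrix.det_transpose, detA]

lemma detA_ne_zero_aux [FiniteDimensional ℝ V]
    (ω : LinearMap.BilinForm ℝ V) (hnd : LinearMap.BilinForm.Nondegenerate ω)
    (n : ℕ) (hV : finrank ℝ V = 2 * n)
    {L M : Submodule ℝ V}
    (hL : IsLagrangian ω n L) (hM : finrank ℝ M = n)
    (hLM : L ⊓ M = ⊥)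
    (l : Basis (Fin n) ℝ L) (m : Basis (Fin n) ℝ M) :
    detA ω l m ≠ 0 := by
  have hsup : L ⊔ M = ⊤ := by
    apply Submodule.eq_top_of_finrank_eq
    have h := Submodule.finrank_sup_add_finrank_inf_eq L M
    rw [hLM] at h
    simp only [finrank_bot, add_zero] at h
    rw [hV]; rw [hL.1, hM] at h; omega
  intro hdet
  obtain ⟨c, hc, hc0⟩ := Matrix.exists_vecMul_eq_zero_iff.mpr hdet
  set v : V := ∑ i, c i • (l i : V) with hv
  have hvL : v ∈ L := Submodule.sum_smul_mem L c (fun i _ => (l i).2)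
  have hωm : ∀ j, ω v (m j) = 0 := by
    intro j
    have h := congrFun hc0 j
    simp only [Matrix.vecMul, dotProduct, Matrix.of_apply, Pi.zero_apply] at h
    simpa [hv, map_sum, smul_eq_mul] using h
  have hωM : ∀ y ∈ M, ω v y = 0 := by
    intro y hy
    have hy' : y = ∑ i, m.repr ⟨y, hy⟩ i • (m i : V) := by
      simpa only [map_sum, map_smul, Submodule.subtype_apply] using congrArg (Submodule.subtype M) (m.sum_repr ⟨y, hy⟩).symm
    rw [hy']
    simp [map_sum, hωm]
  have hv0 : v = 0 := by
    apply hnd.1 v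
    intro w
    have hw : w ∈ L ⊔ M := hsup ▸ Submodule.mem_top
    obtain ⟨x, hx, y, hy, rfl⟩ := Submodule.mem_sup.mp hw
    rw [map_add, hL.2 v hvL x hx, hωM y hy, add_zero]
  have hsum : ∑ i, c i • l i = (0 : L) := by
    apply Subtype.ext
    simpa [hv] using hv0
  have := Fintype.linearIndependent_iff.mp l.linearIndependent c hsum
  exact hc (funext this)

/-- The cross ratio of four Lagrangian subspaces is well defined: it does not depend
on the choice of bases, and the determinants in the denominator are nonzero. -/
theorem lagrangian_crossRatio_wellDefined
    [FiniteDimensional ℝ V]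
    (ω : LinearMap.BilinForm ℝ V) (halt : LinearMap.IsAlt ω)
    (hnd : LinearMap.BilinForm.Nondegenerate ω)
    (n : ℕ) (hV : Module.finrank ℝ V = 2 * n)
    (L1 L2 L3 L4 : Submodule ℝ V)
    (h1 : IsLagrangian ω n L1) (h2 : IsLagrangian ω n L2)
    (h3 : IsLagrangian ω n L3) (h4 : IsLagrangian ω n L4)
    (h14 : L1 ⊓ L4 = ⊥) (h32 : L3 ⊓ L2 = ⊥)
    (l1 l1' : Basis (Fin n) ℝ L1) (l2 l2' : Basis (Fin n) ℝ L2)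
    (l3 l3' : Basis (Fin n) ℝ L3) (l4 l4' : Basis (Fin n) ℝ L4) :
    detA ω l1 l4 ≠ 0 ∧ detA ω l3 l2 ≠ 0 ∧
    detA ω l1' l4' ≠ 0 ∧ detA ω l3' l2' ≠ 0 ∧
    detA ω l1 l2 * detA ω l3 l4 / (detA ω l1 l4 * detA ω l3 l2) =
      detA ω l1' l2' * detA ω l3' l4' / (detA ω l1' l4' * detA ω l3' l2') := by
  have d14 := detA_ne_zero_aux ω hnd n hV h1 h4.1 h14 l1 l4
  have d32 := detA_ne_zero_aux ω hnd n hV h3 h2.1 h32 l3 l2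
  have d14' := detA_ne_zero_aux ω hnd n hV h1 h4.1 h14 l1' l4'
  have d32' := detA_ne_zero_aux ω hnd n hV h3 h2.1 h32 l3' l2'
  refine ⟨d14, d32, d14', d32', ?_⟩
  rw [detA_change ω l1 l1' l2 l2', detA_change ω l3 l3' l4 l4',
    detA_change ω l1 l1' l4 l4', detA_change ω l3 l3' l2 l2']
  rw [div_eq_div_iff (mul_ne_zero d14 d32) ?_]
  · ring
  · rw [← detA_change ω l1 l1' l4 l4', ← detA_change ω l3 l3' l2 l2']
    exact mul_ne_zero d14' d32'
end

section
/- Let E, F_1, F_2, G be Lagrangian subspaces of V such that the triples (E, F_1, G) and (E, F_2, G) are both positive. Then E ∩ F_2 = 0 and G ∩ F_1 = 0 (so that the cross ratio B(E, F_1, G, F_2) is defined), and B(E, F_1, G, F_2) > 0. -/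
open Module

variable {V : Type*} [AddCommGroup V] [Module ℝ V]

/-- The cross ratio `B(L1,L2,L3,L4)` of four Lagrangian subspaces, computed with
respect to chosen bases `l1, l2, l3, l4` (its value is independent of these choices). -/
noncomputable def crossRatioB {n : ℕ} (ω : LinearMap.BilinForm ℝ V)
    {L1 L2 L3 L4 : Submodule ℝ V}
    (l1 : Basis (Fin n) ℝ L1) (l2 : Basis (Fin n) ℝ L2)
    (l3 : Basis (Fin n) ℝ L3) (l4 : Basis (Fin n) ℝ L4) : ℝ :=
  detA ω l1 l2 * detA ω l3 l4 / (detA ω l1 l4 * detA ω l3 l2)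

/-- A triple `(F, G, L)` of Lagrangian subspaces is positive if `F ⊕ L = V` and, for every
nonzero `u ∈ G`, writing `u = u_F + u_L` with `u_F ∈ F`, `u_L ∈ L`, one has `ω(u_F, u_L) > 0`. -/
def IsPositiveTriple (ω : LinearMap.BilinForm ℝ V) (F G L : Submodule ℝ V) : Prop :=
  IsCompl F L ∧
    ∀ u ∈ G, u ≠ 0 → ∀ uF ∈ F, ∀ uL ∈ L, u = uF + uL → 0 < ω uF uL

private lemma detA_mul_detA_key {n : ℕ} (ω : LinearMap.BilinForm ℝ V) (halt : LinearMap.IsAlt ω)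
    {E G F : Submodule ℝ V}
    (hE : ∀ u ∈ E, ∀ v ∈ E, ω u v = 0) (hG : ∀ u ∈ G, ∀ v ∈ G, ω u v = 0)
    (hF : ∀ u ∈ F, ∀ v ∈ F, ω u v = 0)
    (hc : IsCompl E G)
    (hpos : ∀ u ∈ F, u ≠ 0 → ∀ uF ∈ E, ∀ uL ∈ G, u = uF + uL → 0 < ω uF uL)
    (e : Basis (Fin n) ℝ E) (g : Basis (Fin n) ℝ G) (f : Basis (Fin n) ℝ F) :
    ∃ s : ℝ, 0 < s ∧
      detA ω e f * detA ω g f =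
        ((-1 : ℝ) ^ n * (Matrix.of fun i k => ω (e i : V) (g k : V)).det) * s ∧
      (-1 : ℝ) ^ n * (Matrix.of fun i k => ω (e i : V) (g k : V)).det ≠ 0 := by
  classical
  set πE := E.linearProjOfIsCompl G hc with hπE
  set πG := G.linearProjOfIsCompl E hc.symm with hπG
  have hsplit : ∀ v : V, (πE v : V) + (πG v : V) = v := fun v =>
    Submodule.projection_add_projection_eq_self hc v
  set P : Matrix (Fin n) (Fin n) ℝ := Matrix.of fun k j => e.repr (πE (f j)) k with hPdef
  set Q : Matrix (Fin n) (Fin n) ℝ := Matrix.of fun k j => g.repr (πG (f j)) k with hQdef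
  set W : Matrix (Fin n) (Fin n) ℝ := Matrix.of fun i k => ω (e i : V) (g k : V) with hWdef
  set S : Matrix (Fin n) (Fin n) ℝ :=
    Matrix.of fun j k => ω (πE (f j) : V) (πG (f k) : V) with hSdef
  have hp : ∀ j, (πE (f j) : V) = ∑ k, P k j • (e k : V) := by
    intro j
    conv_lhs => rw [← e.sum_repr (πE (f j))]
    simp [hPdef]
    exact (congrArg Subtype.val (e.sum_repr (πE (f j)))).symm.trans (by rw [Submodule.coe_sum]; simp only [Submodule.coe_smul])
  have hq : ∀ j, (πG (f j) : V) = ∑ k, Q k j • (g k : V) := by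
    intro j
    conv_lhs => rw [← g.sum_repr (πG (f j))]
    simp [hQdef]
    exact (congrArg Subtype.val (g.sum_repr (πG (f j)))).symm.trans (by rw [Submodule.coe_sum]; simp only [Submodule.coe_smul])
  -- M = W * Q
  have hM : (Matrix.of fun i j => ω (e i : V) (f j : V)) = W * Q := by
    ext i j
    have h1 : ω (e i : V) (f j : V) = ω (e i : V) ((πG (f j)) : V) := by
      rw [← hsplit (f j : V), map_add, hE _ (e i).2 _ (πE (f j : V)).2, zero_add, hsplit]
    rw [Matrix.mul_apply, Matrix.of_apply, h1, hq j, map_sum]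
    refine Finset.sum_congr rfl fun k _ => ?_
    rw [map_smul, smul_eq_mul, mul_comm]
    rfl
  -- N = -(Wᵀ * P)
  have hN : (Matrix.of fun i j => ω (g i : V) (f j : V)) = -(W.transpose * P) := by
    ext i j
    have h1 : ω (g i : V) (f j : V) = ω (g i : V) ((πE (f j)) : V) := by
      rw [← hsplit (f j : V), map_add, hG _ (g i).2 _ (πG (f j : V)).2, add_zero, hsplit]
    rw [Matrix.neg_apply, Matrix.mul_apply, Matrix.of_apply, h1, hp j, map_sum]
    rw [← Finset.sum_neg_distrib]
    refine Finset.sum_congr rfl fun k _ => ?_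
    rw [map_smul, smul_eq_mul]
    have hwk : ω (g i : V) (e k : V) = -ω (e k : V) (g i : V) := (halt.neg _ _).symm
    rw [hwk]
    simp [hWdef, Matrix.transpose_apply, mul_comm]
  -- S = Pᵀ * W * Q
  have hSeq : S = P.transpose * W * Q := by
    ext j k
    rw [hSdef, Matrix.of_apply, hp j, hq k]
    simp only [map_sum, LinearMap.sum_apply, map_smul, LinearMap.smul_apply, smul_eq_mul,
      Matrix.mul_apply, Matrix.transpose_apply, Finset.sum_mul, Finset.mul_sum, hWdef,
      Matrix.of_apply]
    refine Finset.sum_congr rfl fun b _ => Finset.sum_congr rfl fun a _ => by ring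
  -- S symmetric
  have hkey : ∀ j k, S j k = S k j := by
    intro j k
    have h0 : ω ((πE (f j : V) : V) + (πG (f j : V) : V))
        ((πE (f k : V) : V) + (πG (f k : V) : V)) = 0 := by
      rw [hsplit, hsplit]; exact hF _ (f j).2 _ (f k).2
    simp only [map_add, LinearMap.add_apply] at h0
    rw [hE _ (πE (f j : V)).2 _ (πE (f k : V)).2, hG _ (πG (f j : V)).2 _ (πG (f k : V)).2] at h0
    have h2 : ω ((πG (f j : V)) : V) ((πE (f k : V)) : V)
        = -ω ((πE (f k : V)) : V) ((πG (f j : V)) : V) := (halt.neg _ _).symm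
    rw [h2] at h0
    have e1 : S j k = ω ((πE (f j : V)) : V) ((πG (f k : V)) : V) := rfl
    have e2 : S k j = ω ((πE (f k : V)) : V) ((πG (f j : V)) : V) := rfl
    rw [e1, e2]
    linarith
  -- S positive definite
  have hPD : S.PosDef := by
    constructor
    · ext j k
      simp only [Matrix.conjTranspose_apply, star_trivial]
      exact hkey k j
    · intro x hx
      set u : F := ∑ j, x j • f j with hu
      have hune : u ≠ 0 := by
        intro h
        apply hx
        ext j
        exact Fintype.linearIndependent_iff.mp f.linearIndependent x (hu ▸ h) j
      have huv : (u : V) ≠ 0 := fun h => hune (Subtype.coe_injective h)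
      have hEu : ((πE (u : V)) : V) = ∑ j, x j • ((πE (f j : V)) : V) := by
        simp [hu, map_sum, map_smul]
      have hGu : ((πG (u : V)) : V) = ∑ j, x j • ((πG (f j : V)) : V) := by
        simp [hu, map_sum, map_smul]
      have hposu := hpos (u : V) u.2 huv (πE (u : V)) (πE (u : V)).2 (πG (u : V)) (πG (u : V)).2
        (hsplit _).symm
      have hform : (x.sum fun i xi => x.sum fun j xj => star xi * S i j * xj) =
          ω ((πE (u : V)) : V) ((πG (u : V)) : V) := by
        rw [hEu, hGu]
        rw [Finsupp.sum_fintype _ _ (by simp)]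
        have hsum : ∀ i, (x.sum fun j xj => star (x i) * S i j * xj) =
            ∑ j, star (x i) * S i j * x j := fun i => Finsupp.sum_fintype _ _ (by simp)
        simp only [hsum]
        simp only [map_sum, LinearMap.sum_apply, map_smul, LinearMap.smul_apply, smul_eq_mul,
          star_trivial, Finset.mul_sum]
        refine Finset.sum_congr rfl fun j _ => Finset.sum_congr rfl fun k _ => ?_
        have hskj : S k j = ω ((πE (f k : V)) : V) ((πG (f j : V)) : V) := rfl
        rw [hkey j k, hskj]; ring
      rw [hform]
      exact hposu
  have hdS : 0 < S.det := hPD.det_pos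
  have hdetS : S.det = P.det * W.det * Q.det := by
    rw [hSeq, Matrix.det_mul, Matrix.det_mul, Matrix.det_transpose]
  have hW0 : W.det ≠ 0 := by
    intro h
    rw [h, mul_zero, zero_mul] at hdetS
    exact absurd (hdetS ▸ hdS) (lt_irrefl 0)
  refine ⟨S.det, hdS, ?_, mul_ne_zero (pow_ne_zero _ (by norm_num)) hW0⟩
  unfold detA
  rw [hM, hN, Matrix.det_neg, Matrix.det_mul, Matrix.det_mul, Matrix.det_transpose, hdetS,
    Fintype.card_fin]
  ring


private lemma ratio_pos_aux {a b cc d c s1 s2 : ℝ} (hs1 : 0 < s1) (hs2 : 0 < s2) (hc0 : c ≠ 0)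
    (h1 : a * d = c * s1) (h2 : cc * b = c * s2) : 0 < a * b / (cc * d) := by
  have had : a * d ≠ 0 := by rw [h1]; exact mul_ne_zero hc0 hs1.ne'
  have hcb : cc * b ≠ 0 := by rw [h2]; exact mul_ne_zero hc0 hs2.ne'
  have hd : d ≠ 0 := fun h => had (by rw [h, mul_zero])
  have hcc : cc ≠ 0 := fun h => hcb (by rw [h, zero_mul])
  have hden : cc * d ≠ 0 := mul_ne_zero hcc hd
  have hnum : 0 < (a * b) * (cc * d) := by
    have he : (a * b) * (cc * d) = (c * c) * (s1 * s2) := by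
      calc (a * b) * (cc * d) = (a * d) * (cc * b) := by ring
        _ = (c * s1) * (c * s2) := by rw [h1, h2]
        _ = (c * c) * (s1 * s2) := by ring
    rw [he]
    exact mul_pos (mul_self_pos.mpr hc0) (mul_pos hs1 hs2)
  have hfin := div_pos hnum (mul_self_pos.mpr hden)
  rwa [show (a * b) * (cc * d) / ((cc * d) * (cc * d)) = a * b / (cc * d) from
    mul_div_mul_right _ _ hden] at hfin


/-- If `(E, F1, G)` and `(E, F2, G)` are positive triples of Lagrangians, then
`E ∩ F2 = 0` and `G ∩ F1 = 0` (so that `B(E, F1, G, F2)` is defined), and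
`B(E, F1, G, F2) > 0` (for any choice of bases). -/
theorem crossRatio_pos_of_positive_triples
    [FiniteDimensional ℝ V]
    (ω : LinearMap.BilinForm ℝ V) (halt : LinearMap.IsAlt ω)
    (hnd : LinearMap.BilinForm.Nondegenerate ω)
    (n : ℕ) (hV : Module.finrank ℝ V = 2 * n)
    (E F1 F2 G : Submodule ℝ V)
    (hE : IsLagrangian ω n E) (hF1 : IsLagrangian ω n F1)
    (hF2 : IsLagrangian ω n F2) (hG : IsLagrangian ω n G)
    (hpos1 : IsPositiveTriple ω E F1 G) (hpos2 : IsPositiveTriple ω E F2 G) :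
    E ⊓ F2 = ⊥ ∧ G ⊓ F1 = ⊥ ∧
      ∀ (e : Basis (Fin n) ℝ E) (f1 : Basis (Fin n) ℝ F1)
        (g : Basis (Fin n) ℝ G) (f2 : Basis (Fin n) ℝ F2),
        0 < crossRatioB ω e f1 g f2 := by
  obtain ⟨hc1, hp1⟩ := hpos1
  obtain ⟨hc2, hp2⟩ := hpos2
  have hEF2 : E ⊓ F2 = ⊥ := by
    rw [Submodule.eq_bot_iff]
    intro u hu
    by_contra hne
    have h0 := hp2 u hu.2 hne u hu.1 0 G.zero_mem (by rw [add_zero])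
    simp at h0
  have hGF1 : G ⊓ F1 = ⊥ := by
    rw [Submodule.eq_bot_iff]
    intro u hu
    by_contra hne
    have h0 := hp1 u hu.2 hne 0 E.zero_mem u hu.1 (by rw [zero_add])
    simp at h0
  refine ⟨hEF2, hGF1, ?_⟩
  intro e f1 g f2
  obtain ⟨s1, hs1, hd1, hc0⟩ := detA_mul_detA_key ω halt hE.2 hG.2 hF1.2 hc1 hp1 e g f1
  obtain ⟨s2, hs2, hd2, -⟩ := detA_mul_detA_key ω halt hE.2 hG.2 hF2.2 hc2 hp2 e g f2
  unfold crossRatioB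
  exact ratio_pos_aux hs1 hs2 hc0 hd1 hd2
end

section
/- Let S be a symplectic automorphism of V, let K be an S-invariant subspace of V of dimension k with basis e = (e_1,…,e_k), and let l = (l_1,…,l_k) be any k-tuple of vectors of V. Then det( (ω(e_i, S l_j))_{ij} ) = det( (ω(e_i, l_j))_{ij} ) / det(S|_K), where S|_K denotes the restriction of S to K. -/
open Module

variable {V : Type*} [AddCommGroup V] [Module ℝ V]

/-- Let `S` be a symplectic automorphism of `(V, ω)`, let `K` be an `S`-invariant subspace
with basis `e = (e_1, …, e_k)` and let `l = (l_1, …, l_k)` be any `k`-tuple of vectors.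
Then `det (ω(e_i, S l_j)) = det (ω(e_i, l_j)) / det (S|_K)`. -/
theorem det_pairing_symplectic_automorphism
    [FiniteDimensional ℝ V]
    (ω : LinearMap.BilinForm ℝ V) (halt : LinearMap.IsAlt ω)
    (hnd : LinearMap.BilinForm.Nondegenerate ω)
    (n : ℕ) (hV : Module.finrank ℝ V = 2 * n)
    (S : V →ₗ[ℝ] V) (hS : ∀ u v : V, ω (S u) (S v) = ω u v)
    (k : ℕ) (K : Submodule ℝ V) (hK : ∀ x ∈ K, S x ∈ K)
    (e : Basis (Fin k) ℝ K) (l : Fin k → V) :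
    (Matrix.of fun (i j : Fin k) => ω (e i : V) (S (l j))).det
      = (Matrix.of fun (i j : Fin k) => ω (e i : V) (l j)).det
          / LinearMap.det (S.restrict hK) := by
  set T := S.restrict hK with hT
  -- S is injective
  have hinjS : Function.Injective S := by
    rw [← LinearMap.ker_eq_bot, LinearMap.ker_eq_bot']
    intro u hu
    apply hnd.1 u
    intro v
    have := hS u v
    rw [hu] at this
    simpa using this.symm
  have hinjT : Function.Injective T := by
    intro x y hxy
    ext
    exact hinjS (congrArg Subtype.val hxy)
  haveI : FiniteDimensional ℝ K := Submodule.finiteDimensional_of_le le_top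
  have hdet : LinearMap.det T ≠ 0 := by
    have hu : IsUnit (LinearMap.det
        ((LinearEquiv.ofInjectiveEndo T hinjT : ↥K ≃ₗ[ℝ] ↥K) : ↥K →ₗ[ℝ] ↥K)) :=
      (LinearEquiv.ofInjectiveEndo T hinjT).isUnit_det'
    have heq : ((LinearEquiv.ofInjectiveEndo T hinjT : ↥K ≃ₗ[ℝ] ↥K) : ↥K →ₗ[ℝ] ↥K) = T := rfl
    rw [heq] at hu
    exact hu.ne_zero
  set B := LinearMap.toMatrix e e T with hB
  set N := (Matrix.of fun (i j : Fin k) => ω (e i : V) (S (l j))) with hN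
  set M := (Matrix.of fun (i j : Fin k) => ω (e i : V) (l j)) with hM
  have key : M = B.transpose * N := by
    ext i j
    have h1 : ω (e i : V) (l j) = ω ((T (e i) : K) : V) (S (l j)) := by
      have : ((T (e i) : K) : V) = S ((e i : K) : V) := rfl
      rw [this, hS]
    have h2 : (T (e i) : K) = ∑ m, B m i • e m := by
      conv_lhs => rw [← Basis.sum_repr e (T (e i))]
      congr 1
      ext m
      rw [hB, LinearMap.toMatrix_apply]
    rw [Matrix.mul_apply]
    simp only [hM, Matrix.of_apply, h1, h2]
    push_cast
    rw [map_sum]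
    simp [hN, mul_comm]
  have hdetB : B.det = LinearMap.det T := LinearMap.det_toMatrix e T
  have : M.det = (LinearMap.det T) * N.det := by
    rw [key, Matrix.det_mul, Matrix.det_transpose, hdetB]
  field_simp [this]
  rw [this]; ring
end

section
/- Let n ≥ 1 and let λ_1, …, λ_n be complex numbers with |λ_1| ≤ |λ_2| ≤ … ≤ |λ_n| and |λ_1 · λ_2 ⋯ λ_n| = 1. Then Σ_{i=1}^{n} |λ_i|² ≥ (|λ_n| / |λ_1|)^{2/n}. -/
/-- Key estimate for well displacement of Hitchin representations: if `λ_1, …, λ_n` are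
complex numbers ordered by modulus with `|λ_1 ⋯ λ_n| = 1`, then
`Σ |λ_i|² ≥ (|λ_n| / |λ_1|) ^ (2/n)`. -/
theorem sum_sq_abs_ge_ratio_rpow (n : ℕ) (hn : 1 ≤ n) (l : Fin n → ℂ)
    (hmono : ∀ i j : Fin n, i ≤ j → ‖l i‖ ≤ ‖l j‖)
    (hprod : ‖∏ i, l i‖ = 1) :
    (‖l ⟨n - 1, by omega⟩‖ / ‖l ⟨0, by omega⟩‖) ^ ((2 : ℝ) / (n : ℝ))
      ≤ ∑ i, ‖l i‖ ^ 2 := by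
  have i0 : Fin n := ⟨0, by omega⟩
  set a : Fin n → ℝ := fun i => ‖l i‖ with ha
  have hprod' : ∏ i, a i = 1 := by
    rw [ha]; simpa [norm_prod] using hprod
  have hpos : ∀ i, 0 < a i := by
    intro i
    rcases lt_or_eq_of_le (norm_nonneg (l i)) with h | h
    · exact h
    · exfalso
      have : ∏ i, a i = 0 := Finset.prod_eq_zero (Finset.mem_univ i) h.symm
      rw [hprod'] at this; norm_num at this
  have hM : ∀ i, a i ≤ a ⟨n - 1, by omega⟩ := fun i =>
    hmono i _ (by simpa [Fin.le_def] using by omega : i ≤ (⟨n - 1, by omega⟩ : Fin n))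
  set P : ℝ := ∏ i ∈ Finset.univ.erase (⟨0, by omega⟩ : Fin n), a i with hP
  have hPle : P ≤ a ⟨n - 1, by omega⟩ ^ (n - 1) := by
    calc P ≤ ∏ _i ∈ Finset.univ.erase (⟨0, by omega⟩ : Fin n), a ⟨n - 1, by omega⟩ :=
          Finset.prod_le_prod (fun i _ => (hpos i).le) (fun i _ => hM i)
      _ = a ⟨n - 1, by omega⟩ ^ (n - 1) := by
          rw [Finset.prod_const, Finset.card_erase_of_mem (Finset.mem_univ _),
            Finset.card_univ, Fintype.card_fin]
  have hsplit : a ⟨0, by omega⟩ * P = 1 := by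
    rw [hP, Finset.mul_prod_erase _ _ (Finset.mem_univ _)]; exact hprod'
  have h1 : a ⟨n - 1, by omega⟩ / a ⟨0, by omega⟩ ≤ a ⟨n - 1, by omega⟩ ^ n := by
    rw [div_le_iff₀ (hpos _)]
    have hMpos := hpos ⟨n - 1, by omega⟩
    calc a ⟨n - 1, by omega⟩ = a ⟨n - 1, by omega⟩ * (a ⟨0, by omega⟩ * P) := by
          rw [hsplit, mul_one]
      _ = (a ⟨n - 1, by omega⟩ * P) * a ⟨0, by omega⟩ := by ring
      _ ≤ (a ⟨n - 1, by omega⟩ * a ⟨n - 1, by omega⟩ ^ (n - 1)) * a ⟨0, by omega⟩ := by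
          exact mul_le_mul_of_nonneg_right
            (mul_le_mul_of_nonneg_left hPle hMpos.le) (hpos _).le
      _ = a ⟨n - 1, by omega⟩ ^ n * a ⟨0, by omega⟩ := by
          have h : n - 1 + 1 = n := by omega
          rw [← pow_succ', h]
  have hMpos := hpos ⟨n - 1, by omega⟩
  have h2 : (a ⟨n - 1, by omega⟩ / a ⟨0, by omega⟩) ^ ((2:ℝ)/(n:ℝ))
      ≤ (a ⟨n - 1, by omega⟩ ^ n : ℝ) ^ ((2:ℝ)/(n:ℝ)) :=
    Real.rpow_le_rpow (div_nonneg hMpos.le (hpos _).le) h1 (by positivity)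
  have h3 : ((a ⟨n - 1, by omega⟩ ^ n : ℝ)) ^ ((2:ℝ)/(n:ℝ)) = a ⟨n - 1, by omega⟩ ^ 2 := by
    rw [← Real.rpow_natCast (a ⟨n - 1, by omega⟩) n, ← Real.rpow_natCast (a ⟨n - 1, by omega⟩) 2,
      ← Real.rpow_mul hMpos.le]
    congr 1
    have : (n : ℝ) ≠ 0 := by positivity
    field_simp
    norm_num
  have h4 : a ⟨n - 1, by omega⟩ ^ 2 ≤ ∑ i, a i ^ 2 :=
    Finset.single_le_sum (f := fun i => a i ^ 2) (fun i _ => sq_nonneg _) (Finset.mem_univ (⟨n - 1, by omega⟩ : Fin n))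
  exact le_trans (h3 ▸ h2) h4
end

section
/- The period of γ equals the period of γ⁻¹: let X be a set, b : X⁴ → ℝ a function satisfying the multiplicative cocycle rule and the symmetry b(x,y,z,t) = b(z,t,x,y) for all x,y,z,t, and γ : X → X a bijection such that b is γ-invariant, with two distinct fixed points γ⁺ and γ⁻ (γ(γ⁺) = γ⁺, γ(γ⁻) = γ⁻). Then for all y, z in X with y ∉ {γ⁺, γ⁻} and z ∉ {γ⁺, γ⁻}, b(γ⁺, γ⁻¹(y), γ⁻, y) = b(γ⁻, γ(z), γ⁺, z). -/
/-!
Invariance and symmetry turn `b(γ⁺, γ⁻¹ y, γ⁻, y)` into `b(γ⁻, γ y, γ⁺, y)`, the period computed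
at `y`. The period does not depend on the base point: the cocycle rule splits it at `γ z` and at `y`,
and invariance identifies `b(γ⁻, γ y, γ⁺, γ z)` with `b(γ⁻, y, γ⁺, z)`.
-/

section

variable {X M : Type*}

def IsMulCocycle [Mul M] (b : X → X → X → X → M) : Prop :=
  ∀ x y z t w : X, x ≠ t → x ≠ w → z ≠ y → z ≠ w → b x y z t = b x y z w * b x w z t

def IsInvariantUnder (b : X → X → X → X → M) (γ : X ≃ X) : Prop :=
  ∀ a b' c d : X, b (γ a) (γ b') (γ c) (γ d) = b a b' c d

theorem IsInvariantUnder.apply_of_isFixedPt {b : X → X → X → X → M} {γ : X ≃ X}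
    (hinv : IsInvariantUnder b γ) {p m : X} (hp : γ p = p) (hm : γ m = m) (a d : X) :
    b p (γ a) m (γ d) = b p a m d := by
  simpa only [hp, hm] using hinv p a m d

theorem Equiv.apply_ne_of_isFixedPt {γ : X ≃ X} {p y : X} (hp : γ p = p) (hy : y ≠ p) :
    γ y ≠ p :=
  hp ▸ γ.injective.ne hy

theorem IsMulCocycle.period_eq [CommSemigroup M] {b : X → X → X → X → M} {γ : X ≃ X}
    (hcocycle : IsMulCocycle b) (hinv : IsInvariantUnder b γ) {p m : X}
    (hp : γ p = p) (hm : γ m = m) {y z : X} (hyp : y ≠ p) (hym : y ≠ m) (hzp : z ≠ p)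
    (hzm : z ≠ m) :
    b m (γ y) p y = b m (γ z) p z := by
  have hγyp := Equiv.apply_ne_of_isFixedPt hp hyp
  have hγzp := Equiv.apply_ne_of_isFixedPt hp hzp
  have hγzm := Equiv.apply_ne_of_isFixedPt hm hzm
  calc b m (γ y) p y
      = b m (γ y) p (γ z) * b m (γ z) p y :=
        hcocycle m (γ y) p y (γ z) hym.symm hγzm.symm hγyp.symm hγzp.symm
    _ = b m (γ z) p y * b m y p z := by
        rw [hinv.apply_of_isFixedPt hm hp, mul_comm]
    _ = b m (γ z) p z := (hcocycle m (γ z) p z y hzm.symm hym.symm hγzp.symm hyp.symm).symm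

end

theorem period_inv_eq_period_general {X : Type*} (b : X → X → X → X → ℝ)
    (hcocycle : ∀ x y z t w : X, x ≠ t → x ≠ w → z ≠ y → z ≠ w →
      b x y z t = b x y z w * b x w z t)
    (hsymm : ∀ x y z t : X, b x y z t = b z t x y)
    (γ : X ≃ X)
    (hinv : ∀ a b' c d : X, b (γ a) (γ b') (γ c) (γ d) = b a b' c d)
    (p m : X) (hp : γ p = p) (hm : γ m = m)
    (y z : X) (hyp : y ≠ p) (hym : y ≠ m) (hzp : z ≠ p) (hzm : z ≠ m) :
    b p (γ.symm y) m y = b m (γ z) p z := by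
  have hinv' : IsInvariantUnder b γ := hinv
  calc b p (γ.symm y) m y
      = b p y m (γ y) := by
        rw [← hinv'.apply_of_isFixedPt hp hm, γ.apply_symm_apply]
    _ = b m (γ y) p y := hsymm p y m (γ y)
    _ = b m (γ z) p z := IsMulCocycle.period_eq hcocycle hinv' hp hm hyp hym hzp hzm

/-- The period of `γ` equals the period of `γ⁻¹`: if `b` satisfies the multiplicative
cocycle rule and the symmetry `b(x,y,z,t) = b(z,t,x,y)`, and is invariant under a
bijection `γ` with distinct fixed points `γ⁺ = p` and `γ⁻ = m`, then
`b(γ⁺, γ⁻¹ y, γ⁻, y) = b(γ⁻, γ z, γ⁺, z)`. -/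
theorem period_inv_eq_period {X : Type*} (b : X → X → X → X → ℝ)
    (hcocycle : ∀ x y z t w : X, x ≠ t → x ≠ w → z ≠ y → z ≠ w →
      b x y z t = b x y z w * b x w z t)
    (hsymm : ∀ x y z t : X, b x y z t = b z t x y)
    (γ : X ≃ X)
    (hinv : ∀ a b' c d : X, b (γ a) (γ b') (γ c) (γ d) = b a b' c d)
    (p m : X) (hpm : p ≠ m) (hp : γ p = p) (hm : γ m = m)
    (y z : X) (hyp : y ≠ p) (hym : y ≠ m) (hzp : z ≠ p) (hzm : z ≠ m) :
    b p (γ.symm y) m y = b m (γ z) p z :=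
  period_inv_eq_period_general b hcocycle hsymm γ hinv p m hp hm y z hyp hym hzp hzm
end
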